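/- arXiv:1908.11679 — 2 statements merged into one kernel-verified Lean document; each statement's English description precedes it below -/
import Mathlib

section
/- Let λ be a partition of n with largest part λ₁, and let μ be a partition of n' = n − λ₁ such that ᵗλ and ᵗμ are 2-transverse. Then μ = λ* = [λ₂, λ₃, …], the partition obtained from λ by deleting its first row. -/
/-- A partition, encoded as a weakly decreasing function `ℕ → ℕ` (0-indexed parts)
that is eventually zero. -/
def IsPartition (f : ℕ → ℕ) : Prop := Antitone f ∧ ∃ N, ∀ i, N ≤ i → f i = 0

/-- The conjugate (transpose) partition: `conj f i = #{j : f j ≥ i+1}` (0-indexed,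
so `conj f i` is the (i+1)-st column length, i.e. ᵗλ_{i+1}). -/
noncomputable def conj (f : ℕ → ℕ) (i : ℕ) : ℕ := Nat.card {j : ℕ // i + 1 ≤ f j}

/-- Two partitions are close if corresponding parts differ by at most 1. -/
def Close (f g : ℕ → ℕ) : Prop := ∀ i, f i ≤ g i + 1 ∧ g i ≤ f i + 1

/-- Two partitions are 2-transverse: they are close and every positive common part
(at equal indices) occurs an even number of times. -/
def Transverse2 (f g : ℕ → ℕ) : Prop :=
  Close f g ∧ ∀ p, 0 < p → Even (Nat.card {i : ℕ // f i = p ∧ g i = p})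

/-- The size |λ| of a partition: the (finite) sum of its parts. -/
noncomputable def psize (f : ℕ → ℕ) : ℕ := ∑ᶠ i, f i

/-- Prepend a part to a partition. -/
def pcons (a : ℕ) (f : ℕ → ℕ) : ℕ → ℕ
  | 0 => a
  | (i+1) => f i

/-- `RemoveTwoHook ν μ` : the partition μ is obtained from ν by removing a 2-hook,
either two adjacent blocks in one row (type (1²)) or two adjacent blocks in one
column (type (2)), the result still being a Young diagram. -/
def RemoveTwoHook (ν μ : ℕ → ℕ) : Prop :=
  IsPartition ν ∧ IsPartition μ ∧
  ((∃ i, μ i + 2 = ν i ∧ ∀ j, j ≠ i → μ j = ν j) ∨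
   (∃ i, μ i + 1 = ν i ∧ μ (i+1) + 1 = ν (i+1) ∧ ∀ j, j ≠ i → j ≠ i + 1 → μ j = ν j))

/-!
Closeness of the conjugates gives `ᵗλ_m ≤ ᵗμ_m + 1` for every column, i.e. the diagram of `μ`
contains that of `λ` with its first row deleted: `λ_{i+1} ≤ μ_i`. Since both diagrams have
`|λ| - λ₁` boxes, the containment is an equality.
-/

section Conjugate

variable {f : ℕ → ℕ}

lemma conj_eq_ncard (f : ℕ → ℕ) (m : ℕ) : conj f m = {j | m + 1 ≤ f j}.ncard := by
  rw [conj, ← Nat.card_coe_set_eq]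
  rfl

lemma IsPartition.tail (hf : IsPartition f) : IsPartition fun i => f (i + 1) := by
  obtain ⟨hfA, N, hN⟩ := hf
  exact ⟨fun i j hij => hfA (Nat.succ_le_succ hij), N, fun i hi => hN (i + 1) (by omega)⟩

lemma conj_le_of_le (hf : Antitone f) {i m : ℕ} (h : f i ≤ m) : conj f m ≤ i := by
  have hsub : {j | m + 1 ≤ f j} ⊆ Set.Iio i := fun j hj => by
    by_contra hij
    have hj : m + 1 ≤ f j := hj
    have := hf (not_lt.1 hij)
    omega
  simpa [conj_eq_ncard] using Set.ncard_le_ncard hsub (Set.finite_Iio i)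

lemma lt_conj_of_lt (hf : IsPartition f) {i m : ℕ} (h : m < f i) : i < conj f m := by
  obtain ⟨hfA, N, hN⟩ := hf
  have hsub : Set.Iic i ⊆ {j | m + 1 ≤ f j} := fun j hj => h.trans_le (hfA hj)
  have hfin : {j | m + 1 ≤ f j}.Finite := (Set.finite_Iio N).subset fun j hj => by
    by_contra hjN
    have hj : m + 1 ≤ f j := hj
    have := hN j (not_lt.1 hjN)
    omega
  have hcard := Set.ncard_le_ncard hsub hfin
  rw [Set.ncard_eq_toFinset_card', Set.toFinset_Iic, Nat.card_Iic] at hcard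
  rw [conj_eq_ncard]
  omega

lemma lt_conj_iff (hf : IsPartition f) {i m : ℕ} : i < conj f m ↔ m < f i :=
  ⟨fun h => not_le.1 fun h' => (conj_le_of_le hf.1 h').not_gt h, lt_conj_of_lt hf⟩

lemma tail_le_of_conj_le_succ {μ : ℕ → ℕ} (hf : IsPartition f) (hμ : IsPartition μ)
    (hle : ∀ m, conj f m ≤ conj μ m + 1) (i : ℕ) : f (i + 1) ≤ μ i := by
  by_contra! h
  obtain ⟨m, hm⟩ : ∃ m, f (i + 1) = m + 1 := Nat.exists_eq_add_one_of_ne_zero (by omega)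
  have hf_col : i + 1 < conj f m := (lt_conj_iff hf).2 (by omega)
  have hμ_col : conj μ m ≤ i := conj_le_of_le hμ.1 (by omega)
  have := hle m
  omega

end Conjugate

section Size

lemma psize_eq_sum_range {f : ℕ → ℕ} {N : ℕ} (hN : ∀ j, N ≤ j → f j = 0) :
    psize f = ∑ i ∈ Finset.range N, f i := by
  refine finsum_eq_finsetSum_of_support_subset f fun j hj => ?_
  simp only [Finset.coe_range, Set.mem_Iio]
  by_contra hjN
  exact hj (hN j (not_lt.1 hjN))

lemma psize_eq_add_psize_tail {f : ℕ → ℕ} (hf : IsPartition f) :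
    psize f = f 0 + psize fun i => f (i + 1) := by
  obtain ⟨-, N, hN⟩ := hf
  rw [psize_eq_sum_range (N := N + 1) fun j hj => hN j (by omega),
    psize_eq_sum_range (N := N) fun j hj => hN (j + 1) (by omega), Finset.sum_range_succ',
    add_comm]

lemma eq_of_le_of_psize_le {f g : ℕ → ℕ} (hf : IsPartition f) (hg : IsPartition g)
    (hle : ∀ i, f i ≤ g i) (hsize : psize g ≤ psize f) : f = g := by
  obtain ⟨-, N, hN⟩ := hf
  obtain ⟨-, M, hM⟩ := hg
  have hNM : ∀ j, max N M ≤ j → f j = 0 ∧ g j = 0 := fun j hj =>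
    ⟨hN j (le_of_max_le_left hj), hM j (le_of_max_le_right hj)⟩
  rw [psize_eq_sum_range fun j hj => (hNM j hj).1,
    psize_eq_sum_range fun j hj => (hNM j hj).2] at hsize
  have heq := (Finset.sum_eq_sum_iff_of_le fun i _ => hle i).1
    (le_antisymm (Finset.sum_le_sum fun i _ => hle i) hsize)
  funext i
  by_cases hi : i < max N M
  · exact heq i (Finset.mem_range.2 hi)
  · rw [(hNM i (not_lt.1 hi)).1, (hNM i (not_lt.1 hi)).2]

end Size

/-- If |μ| = |λ| − λ₁ and ᵗλ, ᵗμ are 2-transverse, then μ = λ*. -/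
theorem stmt4 (f μ : ℕ → ℕ) (hf : IsPartition f) (hμ : IsPartition μ)
    (hsize : psize μ + f 0 = psize f)
    (ht : Transverse2 (conj f) (conj μ)) : μ = fun i => f (i + 1) := by
  have hle : ∀ i, f (i + 1) ≤ μ i := tail_le_of_conj_le_succ hf hμ fun m => (ht.1 m).1
  rw [psize_eq_add_psize_tail hf] at hsize
  exact (eq_of_le_of_psize_le hf.tail hμ hle (by omega)).symm
end

section
/- Let λ be a partition of n with largest part λ₁, and suppose λ₁ > λ₂ (strict largest part). Let λ₁' = λ₁ and n' = n + 1 − λ₁'. Then there is no partition μ' of n' such that ᵗλ and ᵗμ' are 2-transverse. -/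
lemma card_subtype_eq_filter (P : ℕ → Prop) [DecidablePred P] (N : ℕ)
    (h : ∀ j, P j → j < N) :
    Nat.card {j : ℕ // P j} = ((Finset.range N).filter P).card := by
  have hset : {j : ℕ | P j} = ↑((Finset.range N).filter P) := by
    ext j
    simp only [Finset.coe_filter, Finset.mem_range, Set.mem_setOf_eq]
    exact ⟨fun hp => ⟨h j hp, hp⟩, fun hp => hp.2⟩
  calc Nat.card {j : ℕ // P j} = ({j : ℕ | P j} : Set ℕ).ncard :=
        Nat.card_coe_set_eq _
    _ = _ := by rw [hset, Set.ncard_coe_finset]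

lemma conj_eq_card (f : ℕ → ℕ) (N : ℕ) (hN : ∀ j, N ≤ j → f j = 0) (i : ℕ) :
    conj f i = ((Finset.range N).filter (fun j => i + 1 ≤ f j)).card := by
  classical
  unfold conj
  apply card_subtype_eq_filter
  intro j hj
  by_contra hc
  have := hN j (by omega)
  omega

lemma psize_eq_sum (f : ℕ → ℕ) (N : ℕ) (hN : ∀ i, N ≤ i → f i = 0) :
    psize f = ∑ i ∈ Finset.range N, f i := by
  apply finsum_eq_sum_of_support_subset
  intro i hi
  simp only [Function.mem_support] at hi
  simp only [Finset.coe_range, Set.mem_Iio]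
  by_contra hc
  exact hi (hN i (by omega))

lemma conj_antitone (f : ℕ → ℕ) (hf : IsPartition f) : Antitone (conj f) := by
  classical
  obtain ⟨hanti, N, hN⟩ := hf
  intro i j hij
  rw [conj_eq_card f N hN, conj_eq_card f N hN]
  apply Finset.card_le_card
  intro x hx
  simp only [Finset.mem_filter] at *
  exact ⟨hx.1, by omega⟩

lemma conj_zero_of_le (f : ℕ → ℕ) (hf : IsPartition f) (i : ℕ) (hi : f 0 ≤ i) :
    conj f i = 0 := by
  classical
  obtain ⟨hanti, N, hN⟩ := hf
  rw [conj_eq_card f N hN, Finset.card_eq_zero, Finset.filter_eq_empty_iff]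
  intro j _
  have := hanti (Nat.zero_le j)
  omega

lemma psize_conj (f : ℕ → ℕ) (hf : IsPartition f) : psize (conj f) = psize f := by
  classical
  obtain ⟨hanti, N, hN⟩ := hf
  rw [psize_eq_sum (conj f) (f 0) (fun i hi => conj_zero_of_le f ⟨hanti, N, hN⟩ i hi),
    psize_eq_sum f N hN]
  rw [Finset.sum_congr rfl (fun i (_ : i ∈ Finset.range (f 0)) => conj_eq_card f N hN i)]
  simp_rw [Finset.card_filter]
  rw [Finset.sum_comm]
  apply Finset.sum_congr rfl
  intro j _
  have hfj : f j ≤ f 0 := hanti (Nat.zero_le j)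
  rw [← Finset.card_filter]
  have : (Finset.range (f 0)).filter (fun i => i + 1 ≤ f j) = Finset.range (f j) := by
    ext i
    simp only [Finset.mem_filter, Finset.mem_range]
    omega
  rw [this, Finset.card_range]

lemma conj_pos (f : ℕ → ℕ) (hf : IsPartition f) (i : ℕ) (hi : i < f 0) :
    1 ≤ conj f i := by
  classical
  obtain ⟨hanti, N, hN⟩ := hf
  have hN0 : 0 < N := by
    by_contra hc
    have := hN 0 (by omega)
    omega
  rw [conj_eq_card f N hN]
  rw [Nat.succ_le_iff, Finset.card_pos]
  exact ⟨0, by simp only [Finset.mem_filter, Finset.mem_range]; exact ⟨hN0, by omega⟩⟩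

lemma conj_top (f : ℕ → ℕ) (hf : IsPartition f) (h : f 1 < f 0) :
    conj f (f 0 - 1) = 1 := by
  classical
  obtain ⟨hanti, N, hN⟩ := hf
  have hN0 : 0 < N := by
    by_contra hc
    have := hN 0 (by omega)
    omega
  rw [conj_eq_card f N hN]
  have : (Finset.range N).filter (fun j => f 0 - 1 + 1 ≤ f j) = {0} := by
    ext j
    simp only [Finset.mem_filter, Finset.mem_range, Finset.mem_singleton]
    constructor
    · rintro ⟨hj1, hj2⟩
      by_contra hj0
      have : f j ≤ f 1 := hanti (by omega)
      omega
    · rintro rfl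
      exact ⟨hN0, by omega⟩
  rw [this, Finset.card_singleton]

/-- If λ₁ > λ₂, there is no partition μ' of n + 1 − λ₁ with ᵗλ and ᵗμ'
2-transverse. -/
theorem stmt12 (f : ℕ → ℕ) (hf : IsPartition f) (h : f 1 < f 0) :
    ¬ ∃ μ : ℕ → ℕ, IsPartition μ ∧ psize μ + f 0 = psize f + 1 ∧
      Transverse2 (conj f) (conj μ) := by
  classical
  rintro ⟨μ, hμ, hsum, hclose, heven⟩
  set a := conj f with ha
  set b := conj μ with hb
  set L := f 0 with hLdef
  have hL1 : 1 ≤ L := by omega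
  have ha0 : ∀ i, L ≤ i → a i = 0 := fun i hi => conj_zero_of_le f hf i hi
  have hapos : ∀ i, i < L → 1 ≤ a i := fun i hi => conj_pos f hf i hi
  have hatop : a (L - 1) = 1 := conj_top f hf h
  have hbanti : Antitone b := conj_antitone μ hμ
  have hb0 : ∀ i, μ 0 ≤ i → b i = 0 := fun i hi => conj_zero_of_le μ hμ i hi
  set K := max L (μ 0) with hK
  have hLK : L ≤ K := le_max_left _ _
  have haK : ∀ i, K ≤ i → a i = 0 := fun i hi => ha0 i (le_trans hLK hi)
  have hbK : ∀ i, K ≤ i → b i = 0 := fun i hi => hb0 i (le_trans (le_max_right _ _) hi)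
  have hsa : psize f = ∑ i ∈ Finset.range K, a i := by
    rw [← psize_conj f hf, ← ha]
    exact psize_eq_sum a K haK
  have hsb : psize μ = ∑ i ∈ Finset.range K, b i := by
    rw [← psize_conj μ hμ, ← hb]
    exact psize_eq_sum b K hbK
  rw [hsa, hsb] at hsum
  -- cast to ℤ
  have hsumZ : ∑ i ∈ Finset.range K, ((a i : ℤ) - b i) = (L : ℤ) - 1 := by
    rw [Finset.sum_sub_distrib]
    have h1 : ∑ i ∈ Finset.range K, (a i : ℤ) = ((∑ i ∈ Finset.range K, a i : ℕ) : ℤ) := by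
      push_cast; ring
    have h2 : ∑ i ∈ Finset.range K, (b i : ℤ) = ((∑ i ∈ Finset.range K, b i : ℕ) : ℤ) := by
      push_cast; ring
    rw [h1, h2]
    omega
  have hsplit : ∑ i ∈ Finset.range L, ((a i : ℤ) - b i)
      + ∑ i ∈ Finset.Ico L K, ((a i : ℤ) - b i)
      = ∑ i ∈ Finset.range K, ((a i : ℤ) - b i) := by
    rw [Finset.range_eq_Ico, Finset.range_eq_Ico]
    exact Finset.sum_Ico_consecutive (fun i => ((a i : ℤ) - b i)) (Nat.zero_le L) hLK
  have htail : ∑ i ∈ Finset.Ico L K, ((a i : ℤ) - b i)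
      = - ∑ i ∈ Finset.Ico L K, (b i : ℤ) := by
    rw [← Finset.sum_neg_distrib]
    apply Finset.sum_congr rfl
    intro i hi
    rw [Finset.mem_Ico] at hi
    rw [ha0 i hi.1]
    ring
  set A := ∑ i ∈ Finset.range L, ((1 : ℤ) - ((a i : ℤ) - b i)) with hA
  set B := ∑ i ∈ Finset.Ico L K, (b i : ℤ) with hB
  have hAeq : A = (L : ℤ) - ∑ i ∈ Finset.range L, ((a i : ℤ) - b i) := by
    rw [hA, Finset.sum_sub_distrib]
    simp [Finset.sum_const, Finset.card_range]
  have hkey : A + B = 1 := by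
    rw [hAeq]
    have := hsplit
    rw [htail] at this
    omega
  have hAterm : ∀ i ∈ Finset.range L, (0 : ℤ) ≤ 1 - ((a i : ℤ) - b i) := by
    intro i _
    have := (hclose i).1
    omega
  have hBterm : ∀ i ∈ Finset.Ico L K, (0 : ℤ) ≤ (b i : ℤ) := by
    intro i _; positivity
  have hAnn : 0 ≤ A := Finset.sum_nonneg hAterm
  have hBnn : 0 ≤ B := Finset.sum_nonneg hBterm
  have hAcase : A = 0 ∨ A = 1 := by omega
  rcases hAcase with hA0 | hA1
  · -- all a i = b i + 1 on range L; tail sum B = 1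
    have hall : ∀ i ∈ Finset.range L, (1 : ℤ) - ((a i : ℤ) - b i) = 0 :=
      (Finset.sum_eq_zero_iff_of_nonneg hAterm).1 hA0
    have hB1 : B = 1 := by omega
    -- some tail index with b positive
    have hex : ∃ i ∈ Finset.Ico L K, 0 < b i := by
      by_contra hc
      push_neg at hc
      have : B = 0 := Finset.sum_eq_zero (fun i hi => by
        have := hc i hi; omega)
      omega
    obtain ⟨i0, hi0, hbi0⟩ := hex
    rw [Finset.mem_Ico] at hi0
    have h1 : b L ≤ b (L - 1) := hbanti (by omega)
    have h2 : b i0 ≤ b L := hbanti hi0.1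
    have h3 : (1 : ℤ) - ((a (L-1) : ℤ) - b (L-1)) = 0 :=
      hall (L-1) (Finset.mem_range.2 (by omega))
    rw [hatop] at h3
    omega
  · -- B = 0, exactly one index i* < L with a i* = b i*
    have hB0 : B = 0 := by omega
    have hbtail : ∀ i, L ≤ i → b i = 0 := by
      intro i hi
      rcases le_or_gt K i with hKi | hKi
      · exact hbK i hKi
      · have := (Finset.sum_eq_zero_iff_of_nonneg hBterm).1 hB0 i
          (Finset.mem_Ico.2 ⟨hi, hKi⟩)
        omega
    -- find i*
    have hex : ∃ i ∈ Finset.range L, (1 : ℤ) - ((a i : ℤ) - b i) ≠ 0 := by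
      by_contra hc
      push_neg at hc
      have : A = 0 := Finset.sum_eq_zero hc
      omega
    obtain ⟨istar, histar, hne⟩ := hex
    have hpos_star : 0 < 1 - ((a istar : ℤ) - b istar) := by
      have := hAterm istar histar
      omega
    have hsum_erase : ((1 : ℤ) - ((a istar : ℤ) - b istar))
        + ∑ i ∈ (Finset.range L).erase istar, ((1 : ℤ) - ((a i : ℤ) - b i)) = A := by
      rw [hA]
      exact Finset.add_sum_erase (Finset.range L) (fun i => (1 : ℤ) - ((a i : ℤ) - b i)) histar
    have hrest_nn : 0 ≤ ∑ i ∈ (Finset.range L).erase istar, ((1 : ℤ) - ((a i : ℤ) - b i)) :=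
      Finset.sum_nonneg (fun i hi => hAterm i (Finset.mem_of_mem_erase hi))
    have hterm1 : (1 : ℤ) - ((a istar : ℤ) - b istar) = 1 := by omega
    have hrest : ∑ i ∈ (Finset.range L).erase istar, ((1 : ℤ) - ((a i : ℤ) - b i)) = 0 := by
      omega
    have hrest0 : ∀ i ∈ (Finset.range L).erase istar, (1 : ℤ) - ((a i : ℤ) - b i) = 0 := by
      apply (Finset.sum_eq_zero_iff_of_nonneg _).1 hrest
      intro i hi
      exact hAterm i (Finset.mem_of_mem_erase hi)
    have hstar_eq : a istar = b istar := by omega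
    have hother : ∀ i, i < L → i ≠ istar → a i = b i + 1 := by
      intro i hiL hine
      have := hrest0 i (Finset.mem_erase.2 ⟨hine, Finset.mem_range.2 hiL⟩)
      omega
    rw [Finset.mem_range] at histar
    set p := a istar with hp
    have hp1 : 1 ≤ p := hapos istar histar
    have heq := heven p hp1
    have hcard : Nat.card {i : ℕ // a i = p ∧ b i = p} = 1 := by
      rw [card_subtype_eq_filter (fun i => a i = p ∧ b i = p) L ?hbnd]
      case hbnd =>
        intro j hj
        by_contra hc
        have := ha0 j (by omega)
        omega
      have : (Finset.range L).filter (fun i => a i = p ∧ b i = p) = {istar} := by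
        ext i
        simp only [Finset.mem_filter, Finset.mem_range, Finset.mem_singleton]
        constructor
        · rintro ⟨hiL, hap, hbp⟩
          by_contra hine
          have := hother i hiL hine
          omega
        · rintro rfl
          exact ⟨histar, rfl, by omega⟩
      rw [this, Finset.card_singleton]
    rw [hcard] at heq
    exact (Nat.not_even_iff.2 rfl) heq
end
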